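/- The normed ring (A_r, ‖·‖_r) is complete: every Cauchy sequence in A_r with respect to the metric induced by ‖·‖_r converges to an element of A_r. Hence A_r is a Banach ring. -/

import Mathlib

open Filter Topology

/-- The hybrid norm on `ℂ`: `‖z‖_hyb = max {1, |z|}` for `z ≠ 0`, and `‖0‖_hyb = 0`. -/
noncomputable def hybNorm (z : ℂ) : ℝ := if z = 0 then 0 else max 1 ‖z‖

/-- `f ∈ A_r`:  a formal Laurent series `f = Σ aₙ tⁿ ∈ ℂ((t))` belongs to `A_r` when
`Σₙ ‖aₙ‖_hyb rⁿ < ∞`. -/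
def memAr (r : ℝ) (f : LaurentSeries ℂ) : Prop :=
  Summable (fun n : ℤ => hybNorm (f.coeff n) * r ^ n)

/-- The norm `‖f‖_r = Σₙ ‖aₙ‖_hyb rⁿ` on `A_r`. -/
noncomputable def normAr (r : ℝ) (f : LaurentSeries ℂ) : ℝ :=
  ∑' n : ℤ, hybNorm (f.coeff n) * r ^ n

/-!
Since `‖a‖ ≤ ‖a‖_hyb`, a Cauchy sequence `Fₖ` in `A_r` is coefficientwise Cauchy, with a
coefficientwise limit `L`. A nonzero coefficient has hybrid norm at least `1` and `rⁿ ≥ 1` for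
`n ≤ 0`, so two terms at distance `< 1` have the same principal part: the principal parts of
`Fₖ` stabilise and `L` is a Laurent series `g`. Finally the hybrid norm is lower semicontinuous,
so by Fatou's lemma `‖Fₘ - g‖_r ≤ liminfₖ ‖Fₘ - Fₖ‖_r`.
-/

lemma hybNorm_nonneg (z : ℂ) : 0 ≤ hybNorm z := by
  unfold hybNorm
  split_ifs
  exacts [le_rfl, zero_le_one.trans (le_max_left _ _)]

lemma norm_le_hybNorm (z : ℂ) : ‖z‖ ≤ hybNorm z := by
  unfold hybNorm
  split_ifs with hz
  exacts [by simp [hz], le_max_right _ _]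

lemma one_le_hybNorm {z : ℂ} (hz : z ≠ 0) : 1 ≤ hybNorm z := by
  rw [hybNorm, if_neg hz]
  exact le_max_left _ _

lemma hybNorm_sub_le (a b : ℂ) : hybNorm (a - b) ≤ hybNorm a + hybNorm b := by
  by_cases hab : a - b = 0
  · rw [hybNorm, if_pos hab]
    exact add_nonneg (hybNorm_nonneg a) (hybNorm_nonneg b)
  have hone : 1 ≤ hybNorm a + hybNorm b := by
    by_cases ha : a = 0
    · have hb : b ≠ 0 := by rintro rfl; simp [ha] at hab
      linarith [one_le_hybNorm hb, hybNorm_nonneg a]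
    · linarith [one_le_hybNorm ha, hybNorm_nonneg b]
  rw [hybNorm, if_neg hab]
  exact max_le hone <| (norm_sub_le a b).trans <|
    add_le_add (norm_le_hybNorm a) (norm_le_hybNorm b)

lemma hybNorm_eq_max_indicator (z : ℂ) :
    hybNorm z = max (({0}ᶜ : Set ℂ).indicator 1 z) ‖z‖ := by
  by_cases hz : z = 0 <;> simp [hybNorm, hz]

lemma lowerSemicontinuous_hybNorm : LowerSemicontinuous hybNorm := by
  rw [funext hybNorm_eq_max_indicator]
  exact (isOpen_compl_singleton.lowerSemicontinuous_indicator zero_le_one).sup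
    continuous_norm.lowerSemicontinuous

section Ar

variable {r : ℝ}

lemma hybNorm_coeff_mul_zpow_nonneg (hr : 0 ≤ r) (f : LaurentSeries ℂ) (n : ℤ) :
    0 ≤ hybNorm (f.coeff n) * r ^ n :=
  mul_nonneg (hybNorm_nonneg _) (zpow_nonneg hr n)

lemma normAr_nonneg (hr : 0 ≤ r) (f : LaurentSeries ℂ) : 0 ≤ normAr r f :=
  tsum_nonneg (hybNorm_coeff_mul_zpow_nonneg hr f)

lemma memAr.sub (hr : 0 ≤ r) {f g : LaurentSeries ℂ} (hf : memAr r f) (hg : memAr r g) :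
    memAr r (f - g) := by
  refine (hf.add hg).of_nonneg_of_le (hybNorm_coeff_mul_zpow_nonneg hr _) fun n => ?_
  rw [HahnSeries.coeff_sub, ← add_mul]
  exact mul_le_mul_of_nonneg_right (hybNorm_sub_le _ _) (zpow_nonneg hr n)

lemma hybNorm_coeff_mul_zpow_le_normAr (hr : 0 ≤ r) {f : LaurentSeries ℂ} (hf : memAr r f)
    (n : ℤ) : hybNorm (f.coeff n) * r ^ n ≤ normAr r f :=
  hf.le_tsum n fun m _ => hybNorm_coeff_mul_zpow_nonneg hr f m

lemma norm_coeff_mul_zpow_le_normAr (hr : 0 ≤ r) {f : LaurentSeries ℂ} (hf : memAr r f)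
    (n : ℤ) : ‖f.coeff n‖ * r ^ n ≤ normAr r f :=
  (mul_le_mul_of_nonneg_right (norm_le_hybNorm _) (zpow_nonneg hr n)).trans
    (hybNorm_coeff_mul_zpow_le_normAr hr hf n)

lemma coeff_eq_zero_of_normAr_lt_one (hr0 : 0 < r) (hr1 : r ≤ 1) {f : LaurentSeries ℂ}
    (hf : memAr r f) (hlt : normAr r f < 1) {n : ℤ} (hn : n ≤ 0) : f.coeff n = 0 := by
  by_contra hne
  have hrn : 1 ≤ r ^ n := one_le_zpow_of_nonpos₀ hr0 hr1 hn
  have : 1 ≤ hybNorm (f.coeff n) * r ^ n :=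
    one_le_mul_of_one_le_of_one_le (one_le_hybNorm hne) hrn
  linarith [hybNorm_coeff_mul_zpow_le_normAr hr0.le hf n]

lemma lowerSemicontinuous_sum_hybNorm_mul_zpow (hr : 0 ≤ r) (S : Finset ℤ) :
    LowerSemicontinuous fun a : ℤ → ℂ => ∑ n ∈ S, hybNorm (a n) * r ^ n :=
  lowerSemicontinuous_sum fun n _ =>
    (continuous_mul_const (r ^ n)).comp_lowerSemicontinuous
      (lowerSemicontinuous_hybNorm.comp (continuous_apply n))
      fun _ _ h => mul_le_mul_of_nonneg_right h (zpow_nonneg hr n)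

lemma memAr_and_normAr_le_of_tendsto_coeff (hr : 0 ≤ r) {ι : Type*} {l : Filter ι} [l.NeBot]
    {G : ι → LaurentSeries ℂ} {g : LaurentSeries ℂ} {c : ℝ}
    (hlim : ∀ n, Tendsto (fun k => (G k).coeff n) l (𝓝 (g.coeff n)))
    (hG : ∀ᶠ k in l, memAr r (G k) ∧ normAr r (G k) ≤ c) :
    memAr r g ∧ normAr r g ≤ c := by
  have hsum : ∀ S : Finset ℤ, ∑ n ∈ S, hybNorm (g.coeff n) * r ^ n ≤ c := fun S =>
    ((lowerSemicontinuous_sum_hybNorm_mul_zpow hr S).isClosed_preimage c).mem_of_tendsto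
      (tendsto_pi_nhds.2 hlim) <| hG.mono fun k hk =>
        (hk.1.sum_le_tsum S fun n _ => hybNorm_coeff_mul_zpow_nonneg hr _ n).trans hk.2
  have hg : memAr r g := summable_of_sum_le (hybNorm_coeff_mul_zpow_nonneg hr g) hsum
  exact ⟨hg, hg.tsum_le_of_sum_le hsum⟩

variable {F : ℕ → LaurentSeries ℂ}

lemma cauchySeq_coeff (hr : 0 < r) (hF : ∀ k, memAr r (F k))
    (hCauchy : ∀ ε : ℝ, 0 < ε → ∃ N : ℕ, ∀ m n : ℕ, N ≤ m → N ≤ n →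
      normAr r (F m - F n) < ε) (n : ℤ) :
    CauchySeq fun k => (F k).coeff n := by
  rw [Metric.cauchySeq_iff]
  intro ε hε
  have hrn : 0 < r ^ n := zpow_pos hr n
  obtain ⟨N, hN⟩ := hCauchy (ε * r ^ n) (mul_pos hε hrn)
  refine ⟨N, fun m hm k hk => ?_⟩
  rw [dist_eq_norm, ← HahnSeries.coeff_sub]
  exact lt_of_mul_lt_mul_right
    ((norm_coeff_mul_zpow_le_normAr hr.le ((hF m).sub hr.le (hF k)) n).trans_lt
      (hN m k hm hk)) hrn.le

lemma exists_tendsto_coeff (hr0 : 0 < r) (hr1 : r ≤ 1) (hF : ∀ k, memAr r (F k))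
    (hCauchy : ∀ ε : ℝ, 0 < ε → ∃ N : ℕ, ∀ m n : ℕ, N ≤ m → N ≤ n →
      normAr r (F m - F n) < ε) :
    ∃ g : LaurentSeries ℂ, ∀ n,
      Tendsto (fun k => (F k).coeff n) atTop (𝓝 (g.coeff n)) := by
  choose L hL using fun n => cauchySeq_tendsto_of_complete (cauchySeq_coeff hr0 hF hCauchy n)
  obtain ⟨N, hN⟩ := hCauchy 1 one_pos
  have hstable : ∀ k ≥ N, ∀ n ≤ 0, (F k).coeff n = (F N).coeff n := fun k hk n hn =>
    sub_eq_zero.1 <| by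
      simpa using coeff_eq_zero_of_normAr_lt_one hr0 hr1 ((hF k).sub hr0.le (hF N))
        (hN k N hk le_rfl) hn
  have hL_eq : ∀ n ≤ 0, L n = (F N).coeff n := fun n hn =>
    tendsto_nhds_unique (hL n) <| tendsto_const_nhds.congr' <|
      (eventually_ge_atTop N).mono fun k hk => (hstable k hk n hn).symm
  have hbdd : BddBelow (Function.support L) := by
    refine ⟨min (F N).order 0, fun n hn => not_lt.1 fun hlt => hn ?_⟩
    rw [hL_eq n (hlt.le.trans (min_le_right _ _))]
    exact HahnSeries.coeff_eq_zero_of_lt_order (hlt.trans_le (min_le_left _ _))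
  exact ⟨HahnSeries.ofSuppBddBelow L hbdd, hL⟩

lemma eventually_memAr_sub_and_normAr_sub_le (hr : 0 ≤ r) (hF : ∀ k, memAr r (F k))
    (hCauchy : ∀ ε : ℝ, 0 < ε → ∃ N : ℕ, ∀ m n : ℕ, N ≤ m → N ≤ n →
      normAr r (F m - F n) < ε)
    {g : LaurentSeries ℂ} (hg : ∀ n, Tendsto (fun k => (F k).coeff n) atTop (𝓝 (g.coeff n)))
    {ε : ℝ} (hε : 0 < ε) :
    ∀ᶠ m in atTop, memAr r (F m - g) ∧ normAr r (F m - g) ≤ ε := by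
  obtain ⟨N, hN⟩ := hCauchy ε hε
  filter_upwards [eventually_ge_atTop N] with m hm
  refine memAr_and_normAr_le_of_tendsto_coeff hr (l := atTop) (G := fun k => F m - F k)
    (fun n => ?_) ?_
  · simpa only [HahnSeries.coeff_sub] using tendsto_const_nhds.sub (hg n)
  · filter_upwards [eventually_ge_atTop N] with k hk
    exact ⟨(hF m).sub hr (hF k), (hN m k hm hk).le⟩

end Ar

/-- The normed ring `(A_r, ‖·‖_r)` is complete: every Cauchy sequence in `A_r` for the metric
induced by `‖·‖_r` converges to an element of `A_r`.  Hence `A_r` is a Banach ring. -/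
theorem Ar_complete (r : ℝ) (hr0 : 0 < r) (hr1 : r < 1)
    (F : ℕ → LaurentSeries ℂ) (hF : ∀ k, memAr r (F k))
    (hCauchy : ∀ ε : ℝ, 0 < ε → ∃ N : ℕ, ∀ m n : ℕ, N ≤ m → N ≤ n →
      normAr r (F m - F n) < ε) :
    ∃ g : LaurentSeries ℂ, memAr r g ∧
      Tendsto (fun k => normAr r (F k - g)) atTop (𝓝 0) := by
  obtain ⟨g, hg⟩ := exists_tendsto_coeff hr0 hr1.le hF hCauchy
  have hclose := fun ε (hε : 0 < ε) =>
    eventually_memAr_sub_and_normAr_sub_le hr0.le hF hCauchy hg hε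
  obtain ⟨m, hm, -⟩ := (hclose 1 one_pos).exists
  refine ⟨g, sub_sub_cancel (F m) g ▸ (hF m).sub hr0.le hm, tendsto_order.2 ⟨?_, ?_⟩⟩
  · exact fun a ha => Eventually.of_forall fun k => ha.trans_le (normAr_nonneg hr0.le _)
  · exact fun a ha => (hclose (a / 2) (half_pos ha)).mono fun k hk =>
      hk.2.trans_lt (half_lt_self ha)
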